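/- Let n be a nonnegative integer and let a, c be complex numbers with (1+a−c)_n ≠ 0, (c)_n ≠ 0, and (1−a−n)_n ≠ 0. Then _3F_2(−n, a/2, (a+1)/2 ; 1+a−c, c ; 4) = [(−1)^n (a)_n / (1+a−c)_n] · _3F_2(−n, (c−a−n)/2, (c−a−n+1)/2 ; 1−a−n, c ; 4), both sides being finite sums over k from 0 to n. -/

import Mathlib

open Finset

/-- The rising factorial (Pochhammer symbol) `(a)_k = a(a+1)⋯(a+k-1)`. -/
noncomputable def poch (a : ℂ) (k : ℕ) : ℂ := ∏ i ∈ Finset.range k, (a + i)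

/-!
Clearing denominators turns both sides into `(-1)^n` times
`K(u, v) = ∑_{k+m=n} C(n,k) (u)_{2k} (v)_m (u+v+n+k)_m`, with `(u, v) = (a, c-a-n)` on the
left and `(c-a-n, a)` on the right: the duplication formula `(x/2)_k ((x+1)/2)_k 4^k = (x)_{2k}`
absorbs the quadratic parameters, and the reflection `(x)_m = (-1)^m (1-x-m)_m` rewrites the
quotients `(b)_n / (b)_k = (b+k)_{n-k}`. Expanding `(u+v+n+k)_m = ((u+2k) + (v+m))_m` by
Chu–Vandermonde writes `K(u, v)` as the sum of `n!/(k! i! j!) (u)_{2k+i} (v)_{i+2j}` over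
`k+i+j = n`, which is symmetric under `u ↔ v`, `k ↔ j`.
-/

theorem poch_succ (a : ℂ) (k : ℕ) : poch a (k + 1) = poch a k * (a + k) :=
  prod_range_succ _ _

theorem poch_add (a : ℂ) (m l : ℕ) : poch a (m + l) = poch a m * poch (a + m) l := by
  rw [poch, poch, poch, prod_range_add]
  congr 1
  exact prod_congr rfl fun i _ => by push_cast; ring

theorem poch_ne_zero_of_le {a : ℂ} {k n : ℕ} (hkn : k ≤ n) (h : poch a n ≠ 0) :
    poch a k ≠ 0 := by
  obtain ⟨m, rfl⟩ := Nat.exists_eq_add_of_le hkn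
  exact left_ne_zero_of_mul (poch_add a k m ▸ h)

theorem poch_eq_neg_one_pow_mul (x : ℂ) (k : ℕ) : poch x k = (-1) ^ k * poch (1 - x - k) k := by
  rw [poch, poch, ← prod_range_reflect, pow_eq_prod_const, ← prod_mul_distrib]
  refine prod_congr rfl fun i hi => ?_
  rw [mem_range] at hi
  rw [Nat.sub_sub, Nat.cast_sub (by omega)]
  push_cast
  ring

theorem poch_half_mul_poch_half_add_one (x : ℂ) (k : ℕ) :
    poch (x / 2) k * poch ((x + 1) / 2) k * 4 ^ k = poch x (2 * k) := by
  induction k with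
  | zero => simp [poch]
  | succ k ih =>
    rw [show 2 * (k + 1) = 2 * k + 1 + 1 by ring, poch_succ, poch_succ, poch_succ, poch_succ,
      pow_succ, ← ih]
    push_cast
    ring

open Polynomial in
theorem poch_eq_descPochhammer (x : ℂ) (k : ℕ) :
    poch x k = (-1) ^ k * (descPochhammer ℤ k).smeval (-x) := by
  rw [← aeval_eq_smeval, aeval_def, eval₂_eq_eval_map, descPochhammer_map,
    descPochhammer_eval_eq_prod_range, poch, pow_eq_prod_const, ← prod_mul_distrib]
  exact prod_congr rfl fun i _ => by ring

open Polynomial in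
theorem poch_neg_natCast (n k : ℕ) :
    poch (-n) k = (-1) ^ k * k.factorial * n.choose k := by
  rw [poch_eq_descPochhammer, neg_neg, descPochhammer_smeval_eq_descFactorial,
    Nat.descFactorial_eq_factorial_mul_choose]
  push_cast
  ring

theorem poch_add_eq_sum_antidiagonal (x y : ℂ) (m : ℕ) :
    poch (x + y) m = ∑ p ∈ antidiagonal m, m.choose p.1 * (poch x p.1 * poch y p.2) := by
  rw [poch_eq_descPochhammer, neg_add, Ring.descPochhammer_smeval_add _ (Commute.all _ _),
    mul_sum]
  refine sum_congr rfl fun p hp => ?_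
  rw [HasAntidiagonal.mem_antidiagonal] at hp
  rw [poch_eq_descPochhammer, poch_eq_descPochhammer, ← hp, pow_add]
  ring

theorem Finset.Nat.sum_antidiagonal_antidiagonal_comm {M : Type*} [AddCommMonoid M]
    (f : ℕ → ℕ → ℕ → M) (n : ℕ) :
    ∑ p ∈ antidiagonal n, ∑ q ∈ antidiagonal p.2, f p.1 q.1 q.2 =
      ∑ p ∈ antidiagonal n, ∑ q ∈ antidiagonal p.2, f q.2 q.1 p.1 := by
  rw [sum_sigma', sum_sigma']
  refine sum_nbij' (fun x => ⟨(x.2.2, x.2.1 + x.1.1), (x.2.1, x.1.1)⟩)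
    (fun x => ⟨(x.2.2, x.2.1 + x.1.1), (x.2.1, x.1.1)⟩) ?_ ?_ ?_ ?_ ?_
  all_goals
    rintro ⟨⟨k, m⟩, ⟨i, j⟩⟩ h
    simp only [mem_sigma, HasAntidiagonal.mem_antidiagonal] at h
    obtain ⟨rfl, rfl⟩ := h
  · simp only [mem_sigma, HasAntidiagonal.mem_antidiagonal, and_true]; omega
  · simp only [mem_sigma, HasAntidiagonal.mem_antidiagonal, and_true]; omega
  · rfl
  · rfl
  · rfl

theorem Nat.choose_mul_choose_comm (k i j : ℕ) :
    (k + i + j).choose k * (i + j).choose i = (k + i + j).choose j * (i + k).choose i := by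
  have h := Nat.choose_mul (n := k + i + j) (k := i + j) (s := i) (by omega)
  have h' := Nat.choose_mul (n := k + i + j) (k := i + k) (s := i) (by omega)
  rw [Nat.choose_symm_of_eq_add (show k + i + j = k + (i + j) by ring), h,
    Nat.choose_symm_of_eq_add (show k + i + j = j + (i + k) by ring), h',
    show k + i + j - i = k + j by omega, show i + j - i = j by omega,
    show i + k - i = k by omega, Nat.choose_symm_add]

noncomputable def kernelSum (n : ℕ) (u v w : ℂ) : ℂ :=
  ∑ p ∈ antidiagonal n, n.choose p.1 * poch u (2 * p.1) * poch v p.2 * poch (w + p.1) p.2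

theorem kernelSum_eq_sum_antidiagonal_antidiagonal (n : ℕ) (u v : ℂ) :
    kernelSum n u v (u + v + n) = ∑ p ∈ antidiagonal n, ∑ q ∈ antidiagonal p.2,
      ((p.1 + q.1 + q.2).choose p.1 * (q.1 + q.2).choose q.1 : ℕ) *
        (poch u (2 * p.1 + q.1) * poch v (q.1 + 2 * q.2)) := by
  refine sum_congr rfl fun ⟨k, m⟩ hkm => ?_
  rw [HasAntidiagonal.mem_antidiagonal] at hkm
  subst hkm
  have hsplit : u + v + ((k + m : ℕ) : ℂ) + (k : ℕ) = (u + (2 * k : ℕ)) + (v + m) := by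
    push_cast
    ring
  rw [hsplit, poch_add_eq_sum_antidiagonal, mul_sum]
  refine sum_congr rfl fun ⟨i, j⟩ hij => ?_
  rw [HasAntidiagonal.mem_antidiagonal] at hij
  subst hij
  rw [poch_add u (2 * k) i, show i + 2 * j = (i + j) + j by ring, poch_add v (i + j) j,
    show k + i + j = k + (i + j) by ring]
  push_cast
  ring

theorem kernelSum_comm (n : ℕ) (u v w : ℂ) (hw : w = u + v + n) :
    kernelSum n u v w = kernelSum n v u w := by
  rw [hw, kernelSum_eq_sum_antidiagonal_antidiagonal, add_comm u v,
    kernelSum_eq_sum_antidiagonal_antidiagonal]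
  refine (Nat.sum_antidiagonal_antidiagonal_comm (M := ℂ) (fun k i j =>
      ((k + i + j).choose k * (i + j).choose i : ℕ) * (poch u (2 * k + i) * poch v (i + 2 * j)))
      n).trans (sum_congr rfl fun p _ => sum_congr rfl fun q _ => ?_)
  rw [Nat.choose_mul_choose_comm, show q.2 + q.1 + p.1 = p.1 + q.1 + q.2 by ring,
    add_comm (2 * q.2), add_comm q.1 (2 * p.1), mul_comm (poch u _)]

/-- `terminatingF32 n x b c` is `₃F₂(-n, x/2, (x+1)/2; b, c; 4)`. -/
noncomputable def terminatingF32 (n : ℕ) (x b c : ℂ) : ℂ :=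
  ∑ k ∈ range (n + 1), (poch (-(n : ℂ)) k * poch (x / 2) k * poch ((x + 1) / 2) k) /
    ((Nat.factorial k : ℂ) * poch b k * poch c k) * (4 : ℂ) ^ k

theorem terminatingF32_term_mul {n k m : ℕ} (hkm : k + m = n) (x b c : ℂ)
    (hb : poch b k ≠ 0) (hc : poch c k ≠ 0) :
    (poch (-(n : ℂ)) k * poch (x / 2) k * poch ((x + 1) / 2) k) /
      ((Nat.factorial k : ℂ) * poch b k * poch c k) * (4 : ℂ) ^ k * (poch b n * poch c n) =
      (-1) ^ k * n.choose k * poch x (2 * k) * poch (b + k) m * poch (c + k) m := by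
  subst hkm
  have hk : (k.factorial : ℂ) ≠ 0 := Nat.cast_ne_zero.mpr k.factorial_ne_zero
  rw [poch_neg_natCast, ← poch_half_mul_poch_half_add_one, poch_add b, poch_add c]
  field_simp

theorem terminatingF32_mul_poch_mul_poch (n : ℕ) (x y b c : ℂ) (hby : b + y + n = 1)
    (hb : poch b n ≠ 0) (hc : poch c n ≠ 0) :
    terminatingF32 n x b c * (poch b n * poch c n) = (-1) ^ n * kernelSum n x y c := by
  rw [terminatingF32, sum_mul, kernelSum, mul_sum, Nat.sum_antidiagonal_eq_sum_range_succ_mk]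
  refine sum_congr rfl fun k hk => ?_
  have hkn : k ≤ n := Nat.lt_succ_iff.mp (mem_range.mp hk)
  have hy : 1 - (b + k) - ((n - k : ℕ) : ℂ) = y := by
    push_cast [Nat.cast_sub hkn]
    linear_combination -hby
  rw [terminatingF32_term_mul (Nat.add_sub_cancel' hkn) x b c (poch_ne_zero_of_le hkn hb)
    (poch_ne_zero_of_le hkn hc), poch_eq_neg_one_pow_mul (b + k), hy,
    ← pow_sub_mul_pow (-1 : ℂ) hkn]
  ring

theorem stmt_7 (n : ℕ) (a c : ℂ)
    (hac : poch (1 + a - c) n ≠ 0) (hc : poch c n ≠ 0)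
    (han : poch (1 - a - (n : ℂ)) n ≠ 0) :
    ∑ k ∈ range (n + 1),
      (poch (-(n : ℂ)) k * poch (a / 2) k * poch ((a + 1) / 2) k) /
        ((Nat.factorial k : ℂ) * poch (1 + a - c) k * poch c k) * (4 : ℂ) ^ k
    = (-1 : ℂ) ^ n * poch a n / poch (1 + a - c) n *
      ∑ k ∈ range (n + 1),
        (poch (-(n : ℂ)) k * poch ((c - a - (n : ℂ)) / 2) k *
          poch ((c - a - (n : ℂ) + 1) / 2) k) /
          ((Nat.factorial k : ℂ) * poch (1 - a - (n : ℂ)) k * poch c k) * (4 : ℂ) ^ k := by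
  change terminatingF32 n a (1 + a - c) c =
    (-1) ^ n * poch a n / poch (1 + a - c) n * terminatingF32 n (c - a - n) (1 - a - n) c
  have hleft := terminatingF32_mul_poch_mul_poch n a (c - a - n) (1 + a - c) c (by ring) hac hc
  have hright := terminatingF32_mul_poch_mul_poch n (c - a - n) a (1 - a - n) c (by ring) han hc
  have hsymm := kernelSum_comm n a (c - a - n) c (by ring)
  have hreflect : poch (1 - a - n) n = (-1) ^ n * poch a n := by
    rw [poch_eq_neg_one_pow_mul a n, ← mul_assoc, ← mul_pow, neg_one_mul, neg_neg, one_pow,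
      one_mul]
  apply mul_right_cancel₀ (mul_ne_zero hac hc)
  rw [hleft, hsymm, ← hright, hreflect]
  field_simp
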